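/- Let X be a GC_n set with n ≥ 1, n ≠ 3, and let ℓ be an n-node line of X. Suppose there exist n distinct maximal lines of X passing through n distinct nodes of X lying on ℓ (one maximal line through each of the n nodes of ℓ). Then X possesses at least one further maximal line, i.e., X has at least n+1 maximal lines. -/

import Mathlib

open MvPolynomial

/-- Points of the plane `ℝ²`. -/
abbrev Pt : Type := Fin 2 → ℝ

/-- Bivariate real polynomials. -/
abbrev BPoly : Type := MvPolynomial (Fin 2) ℝ

/-- `X` is an `n`-poised node set: it has `N = (n+1)(n+2)/2` nodes and every
interpolation problem with polynomials of total degree at most `n` has a unique solution. -/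
def IsPoised (n : ℕ) (X : Set Pt) : Prop :=
  X.ncard = (n + 1) * (n + 2) / 2 ∧
  ∀ c : Pt → ℝ, ∃! p : BPoly, p.totalDegree ≤ n ∧ ∀ A ∈ X, eval A p = c A

/-- `p` is an `n`-fundamental polynomial of the node `A` for the node set `X`. -/
def IsFund (n : ℕ) (X : Set Pt) (A : Pt) (p : BPoly) : Prop :=
  p.totalDegree ≤ n ∧ eval A p = 1 ∧ ∀ B ∈ X, B ≠ A → eval B p = 0

/-- `X` is a `GC_n` set: it is `n`-poised and each node has a fundamental polynomial
that is a product of `n` polynomials of degree `1`. -/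
def IsGC (n : ℕ) (X : Set Pt) : Prop :=
  IsPoised n X ∧
  ∀ A ∈ X, ∃ p : BPoly, IsFund n X A p ∧
    ∃ f : Fin n → BPoly, (∀ i, (f i).totalDegree = 1) ∧ p = ∏ i, f i

/-- A line is the zero set of a polynomial of degree exactly `1`. -/
def IsLine (L : Set Pt) : Prop :=
  ∃ f : BPoly, f.totalDegree = 1 ∧ L = {x : Pt | eval x f = 0}

/-- A `k`-node line of `X`: a line passing through exactly `k` nodes of `X`. -/
def IsNodeLine (k : ℕ) (X : Set Pt) (L : Set Pt) : Prop :=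
  IsLine L ∧ (X ∩ L).ncard = k

/-- A maximal line of an `n`-poised set `X`: an `(n+1)`-node line. -/
def IsMaxLine (n : ℕ) (X : Set Pt) (L : Set Pt) : Prop :=
  IsNodeLine (n + 1) X L

/-- The node `A` uses the line `L`: a degree-1 polynomial whose zero set is `L`
divides the `n`-fundamental polynomial of `A` with respect to `X`. -/
def Uses (n : ℕ) (X : Set Pt) (L : Set Pt) (A : Pt) : Prop :=
  ∃ p f : BPoly, IsFund n X A p ∧ f.totalDegree = 1 ∧ L = {x : Pt | eval x f = 0} ∧ f ∣ p

/-- `X_ℓ`: the set of nodes of `X` that use the line `L`. -/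
def UseSet (n : ℕ) (X : Set Pt) (L : Set Pt) : Set Pt :=
  {A ∈ X | Uses n X L A}

/-!
Peeling the `n` maximal lines `Mᵢ` off `X` one at a time leaves a `0`-poised set, so some node `O`
lies on none of them. Besides `Aᵢ` and its intersections with the other `Mⱼ`, each `Mᵢ` carries a
node `Bᵢ` lying on no other `Mⱼ`. For `i ≠ j` the fundamental polynomial of the node `Mᵢ ∩ Mⱼ`
has the other `n - 2` maximal lines among its factors, so two lines cover `O, Aᵢ, Aⱼ, Bᵢ, Bⱼ`;
hence, writing `aᵢ = OAᵢ` and `bᵢ = OBᵢ`, always `bᵢ = bⱼ`, `aᵢ = bⱼ` or `aⱼ = bᵢ`. Unless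
`n = 3`, this forces either all `bᵢ` to coincide or all `bᵢ` with `i ≠ j` to equal `aⱼ`; that
line through `O` then carries `n + 1` nodes and is a maximal line other than the `Mᵢ`.
-/

noncomputable def linPoly (a b c : ℝ) : BPoly := C a * X 0 + C b * X 1 + C c

@[simp] lemma eval_linPoly (a b c : ℝ) (x : Pt) :
    eval x (linPoly a b c) = a * x 0 + b * x 1 + c := by
  simp [linPoly]

lemma totalDegree_linPoly {a b c : ℝ} (hab : a ≠ 0 ∨ b ≠ 0) :
    (linPoly a b c).totalDegree = 1 := by
  refine le_antisymm ?_ (Nat.one_le_iff_ne_zero.2 fun h0 => ?_)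
  · unfold linPoly
    grw [totalDegree_add, totalDegree_add, totalDegree_mul, totalDegree_mul]
    simp
  · have hC : linPoly a b c = C (coeff 0 (linPoly a b c)) := totalDegree_eq_zero_iff_eq_C.1 h0
    have h1 := congrArg (eval ![1, 0]) hC
    have h2 := congrArg (eval ![0, 1]) hC
    have h3 := congrArg (eval ![0, 0]) hC
    simp [linPoly] at h1 h2 h3
    exact hab.elim (· (by linarith)) (· (by linarith))

lemma Finsupp.eq_zero_or_single_of_add_le_one {m : Fin 2 →₀ ℕ} (h : m 0 + m 1 ≤ 1) :
    m = 0 ∨ m = Finsupp.single 0 1 ∨ m = Finsupp.single 1 1 := by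
  have : m 0 = 0 ∧ m 1 = 0 ∨ m 0 = 1 ∧ m 1 = 0 ∨ m 0 = 0 ∧ m 1 = 1 := by omega
  rcases this with ⟨h0, h1⟩ | ⟨h0, h1⟩ | ⟨h0, h1⟩ <;> [left; (right; left); (right; right)] <;>
    ext i <;> fin_cases i <;> simp [h0, h1]

lemma eq_linPoly_of_totalDegree_le_one {p : BPoly} (hp : p.totalDegree ≤ 1) :
    p = linPoly (coeff (Finsupp.single 0 1) p) (coeff (Finsupp.single 1 1) p) (coeff 0 p) := by
  ext m
  simp only [linPoly, coeff_add, coeff_C_mul, coeff_X, coeff_C]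
  by_cases hm : m ∈ p.support
  · have hdeg := le_totalDegree hm
    rw [Finsupp.sum_fintype _ _ fun _ => rfl, Fin.sum_univ_two] at hdeg
    rcases Finsupp.eq_zero_or_single_of_add_le_one (hdeg.trans hp) with rfl | rfl | rfl <;>
      simp [Finsupp.single_eq_single_iff, (Finsupp.single_ne_zero.2 one_ne_zero).symm]
  · rw [notMem_support_iff.1 hm]
    split_ifs <;> simp_all

lemma exists_eq_linPoly {f : BPoly} (hf : f.totalDegree = 1) :
    ∃ a b c : ℝ, (a ≠ 0 ∨ b ≠ 0) ∧ f = linPoly a b c := by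
  refine ⟨_, _, _, ?_, eq_linPoly_of_totalDegree_le_one hf.le⟩
  by_contra! hab
  have hf' := eq_linPoly_of_totalDegree_le_one hf.le
  rw [hab.1, hab.2] at hf'
  rw [hf'] at hf
  simp [linPoly] at hf

lemma Pt.ne_iff {P Q : Pt} : P ≠ Q ↔ Q 0 - P 0 ≠ 0 ∨ Q 1 - P 1 ≠ 0 := by
  simp only [Ne, sub_eq_zero, funext_iff, Fin.forall_fin_two]
  tauto

-- for `P = Q` this is the whole plane
def affLine (P Q : Pt) : Set Pt :=
  {x | (x 0 - P 0) * (Q 1 - P 1) - (x 1 - P 1) * (Q 0 - P 0) = 0}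

lemma left_mem_affLine (P Q : Pt) : P ∈ affLine P Q := by simp [affLine]

lemma right_mem_affLine (P Q : Pt) : Q ∈ affLine P Q := by
  simp only [affLine, Set.mem_ofPred_eq]; ring

lemma exists_eq_smul_of_cross_eq_zero {w₀ w₁ u₀ u₁ : ℝ} (h : w₀ * u₁ - w₁ * u₀ = 0)
    (hu : u₀ ≠ 0 ∨ u₁ ≠ 0) : ∃ t : ℝ, w₀ = t * u₀ ∧ w₁ = t * u₁ := by
  rcases hu with hu | hu
  · exact ⟨w₀ / u₀, by field_simp, by field_simp; linear_combination -h⟩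
  · exact ⟨w₁ / u₁, by field_simp; linear_combination h, by field_simp⟩

lemma mem_affLine_iff {P Q x : Pt} (hPQ : P ≠ Q) :
    x ∈ affLine P Q ↔ ∃ t : ℝ, x = P + t • (Q - P) := by
  constructor
  · intro hx
    obtain ⟨t, h₀, h₁⟩ := exists_eq_smul_of_cross_eq_zero hx (Pt.ne_iff.1 hPQ)
    refine ⟨t, funext fun i => ?_⟩
    fin_cases i <;> simp <;> linarith
  · rintro ⟨t, rfl⟩
    simp only [affLine, Set.mem_ofPred_eq, Pi.add_apply, Pi.smul_apply, Pi.sub_apply, smul_eq_mul]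
    ring

lemma isLine_affLine {P Q : Pt} (hPQ : P ≠ Q) : IsLine (affLine P Q) := by
  refine ⟨linPoly (Q 1 - P 1) (-(Q 0 - P 0)) (P 1 * (Q 0 - P 0) - P 0 * (Q 1 - P 1)),
    totalDegree_linPoly ?_, ?_⟩
  · exact (Pt.ne_iff.1 hPQ).symm.imp id neg_ne_zero.2
  · ext x
    simp only [affLine, Set.mem_ofPred_eq, eval_linPoly]
    constructor <;> intro hx <;> linear_combination hx

lemma IsLine.eq_affLine {L : Set Pt} (hL : IsLine L) {P Q : Pt} (hP : P ∈ L) (hQ : Q ∈ L)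
    (hPQ : P ≠ Q) : L = affLine P Q := by
  obtain ⟨f, hf, rfl⟩ := hL
  obtain ⟨a, b, c, hab, rfl⟩ := exists_eq_linPoly hf
  simp only [Set.mem_ofPred_eq, eval_linPoly] at hP hQ
  obtain ⟨s, hs₀, hs₁⟩ := exists_eq_smul_of_cross_eq_zero (w₀ := Q 0 - P 0) (w₁ := Q 1 - P 1)
    (u₀ := -b) (u₁ := a) (by linear_combination hQ - hP) (by simpa [or_comm] using hab)
  have hs : s ≠ 0 := by
    rintro rfl
    exact Pt.ne_iff.1 hPQ |>.elim (· (by simpa using hs₀)) (· (by simpa using hs₁))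
  ext x
  simp only [affLine, Set.mem_ofPred_eq, eval_linPoly, hs₀, hs₁]
  rw [← mul_right_inj' hs]
  constructor <;> intro hx
  · linear_combination hx - s * hP
  · linear_combination hx + s * hP

lemma IsLine.eq_of_mem {L L' : Set Pt} (hL : IsLine L) (hL' : IsLine L') {P Q : Pt}
    (hPL : P ∈ L) (hQL : Q ∈ L) (hPL' : P ∈ L') (hQL' : Q ∈ L') (hPQ : P ≠ Q) : L = L' := by
  rw [hL.eq_affLine hPL hQL hPQ, hL'.eq_affLine hPL' hQL' hPQ]

lemma IsLine.subsingleton_inter {L L' : Set Pt} (hL : IsLine L) (hL' : IsLine L') (hne : L ≠ L') :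
    (L ∩ L').Subsingleton := fun _ hP _ hQ =>
  by_contra fun hPQ => hne (hL.eq_of_mem hL' hP.1 hQ.1 hP.2 hQ.2 hPQ)

lemma IsLine.exists_ne {L : Set Pt} (hL : IsLine L) : ∃ P ∈ L, ∃ Q ∈ L, P ≠ Q := by
  obtain ⟨f, hf, rfl⟩ := hL
  obtain ⟨a, b, c, hab, rfl⟩ := exists_eq_linPoly hf
  rcases hab with ha | hb
  · refine ⟨![-c / a, 0], ?_, ![-(b + c) / a, 1], ?_, fun h => ?_⟩
    · simp; field_simp; ring
    · simp; field_simp; ring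
    · simpa using congrFun h 1
  · refine ⟨![0, -c / b], ?_, ![1, -(a + c) / b], ?_, fun h => ?_⟩
    · simp; field_simp; ring
    · simp; field_simp; ring
    · simpa using congrFun h 0

lemma natDegree_aeval_le_totalDegree {σ R : Type*} [CommSemiring R] {g : σ → Polynomial R}
    (hg : ∀ i, (g i).natDegree ≤ 1) (p : MvPolynomial σ R) :
    (aeval g p).natDegree ≤ p.totalDegree := by
  conv_lhs => rw [p.as_sum]
  rw [map_sum]
  refine Polynomial.natDegree_sum_le_of_forall_le _ _ fun m hm => ?_
  rw [aeval_monomial, Polynomial.algebraMap_eq]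
  refine (Polynomial.natDegree_C_mul_le _ _).trans <| (Polynomial.natDegree_prod_le _ _).trans <|
    (Finset.sum_le_sum fun i _ => ?_).trans (le_totalDegree hm)
  simpa using Polynomial.natDegree_pow_le_of_le (m i) (hg i)

noncomputable def restrictLine (P u : Pt) : BPoly →ₐ[ℝ] Polynomial ℝ :=
  aeval fun i => Polynomial.C (P i) + Polynomial.C (u i) * Polynomial.X

lemma natDegree_restrictLine_le (P u : Pt) (p : BPoly) :
    (restrictLine P u p).natDegree ≤ p.totalDegree :=
  natDegree_aeval_le_totalDegree (fun i => by
    grw [Polynomial.natDegree_add_le, Polynomial.natDegree_C_mul_le]; simp) p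

lemma eval_restrictLine (P u : Pt) (t : ℝ) (p : BPoly) :
    (restrictLine P u p).eval t = eval (P + t • u) p := by
  induction p using MvPolynomial.induction_on with
  | C a => simp [restrictLine]
  | add p q hp hq => simp_all
  | mul_X p i hp => simp_all [restrictLine, mul_comm t]

lemma IsLine.eval_eq_zero {L : Set Pt} (hL : IsLine L) {n : ℕ} {p : BPoly}
    (hp : p.totalDegree ≤ n) {S : Set Pt} (hSL : S ⊆ L) (hS : n < S.ncard)
    (hpS : ∀ s ∈ S, eval s p = 0) {y : Pt} (hy : y ∈ L) : eval y p = 0 := by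
  obtain ⟨P, hP, Q, hQ, hPQ⟩ := hL.exists_ne
  have hparam : ∀ x ∈ L, ∃ t : ℝ, x = P + t • (Q - P) := fun x hx =>
    (mem_affLine_iff hPQ).1 (hL.eq_affLine hP hQ hPQ ▸ hx)
  have hinj : Function.Injective fun t : ℝ => P + t • (Q - P) :=
    (add_right_injective P).comp (smul_left_injective ℝ (sub_ne_zero.2 hPQ.symm))
  set T := (fun t : ℝ => P + t • (Q - P)) ⁻¹' S
  have hT : T.ncard = S.ncard := Set.ncard_preimage_of_injective_subset_range hinj
    fun x hx => (hparam x (hSL hx)).imp fun t ht => ht.symm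
  have hTfin : T.Finite := Set.finite_of_ncard_pos (by omega)
  have hzero : restrictLine P (Q - P) p = 0 := by
    refine Polynomial.eq_zero_of_natDegree_lt_card_of_eval_eq_zero' _ hTfin.toFinset
      (fun t ht => ?_) ?_
    · rw [eval_restrictLine]; exact hpS _ (hTfin.mem_toFinset.1 ht)
    · rw [← Set.ncard_eq_toFinset_card _ hTfin, hT]
      exact (natDegree_restrictLine_le _ _ p).trans_lt (hp.trans_lt hS)
  obtain ⟨t, rfl⟩ := hparam y hy
  rw [← eval_restrictLine, hzero, Polynomial.eval_zero]

lemma eval_aeval {σ τ R : Type*} [CommSemiring R] (y : τ → R) (g : σ → MvPolynomial τ R)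
    (p : MvPolynomial σ R) :
    eval y (aeval g p) = eval (fun i => eval y (g i)) p := by
  induction p using MvPolynomial.induction_on <;> simp_all

lemma X_zero_dvd_of_eval_cons_zero {R : Type*} [CommRing R] [IsDomain R] [Infinite R] {n : ℕ}
    {q : MvPolynomial (Fin (n + 1)) R} (h : ∀ s : Fin n → R, eval (Fin.cons 0 s) q = 0) :
    X 0 ∣ q := by
  have hcoeff : (finSuccEquiv R n q).coeff 0 = 0 := MvPolynomial.funext fun s => by
    rw [map_zero, ← h s, eval_eq_eval_mv_eval', ← Polynomial.coeff_zero_eq_eval_zero,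
      Polynomial.coeff_map]
  have := map_dvd (finSuccEquiv R n).symm (Polynomial.X_dvd_iff.2 hcoeff)
  rwa [← finSuccEquiv_X_zero, AlgEquiv.symm_apply_apply, AlgEquiv.symm_apply_apply] at this

lemma exists_adapted_coordinates {f : BPoly} (hf : f.totalDegree = 1) :
    ∃ G U : Fin 2 → BPoly, U 0 = f ∧ (∀ q, aeval U (aeval G q) = q) ∧
      ∀ y, eval (fun i => eval y (G i)) f = y 0 := by
  obtain ⟨a, b, c, hab, rfl⟩ := exists_eq_linPoly hf
  have hd : a ^ 2 + b ^ 2 ≠ 0 := by rcases hab with h | h <;> positivity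
  set d := a ^ 2 + b ^ 2
  -- `U` is the affine map `x ↦ (f x, -b x₀ + a x₁)` and `G` its inverse
  refine ⟨![linPoly (a / d) (-b / d) (-a * c / d), linPoly (b / d) (a / d) (-b * c / d)],
    ![linPoly a b c, linPoly (-b) a 0], rfl, fun q => MvPolynomial.funext fun x => ?_,
    fun y => ?_⟩
  · rw [eval_aeval, eval_aeval]
    congr 2
    funext i
    fin_cases i <;> simp <;> field_simp <;> ring
  · simp
    field_simp
    ring

lemma dvd_of_eval_eq_zero {f p : BPoly} (hf : f.totalDegree = 1)
    (h : ∀ y, eval y f = 0 → eval y p = 0) : f ∣ p := by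
  obtain ⟨G, U, hU, hUG, hGf⟩ := exists_adapted_coordinates hf
  obtain ⟨r, hr⟩ : X 0 ∣ aeval G p := X_zero_dvd_of_eval_cons_zero fun s => by
    rw [eval_aeval]
    exact h _ ((hGf _).trans rfl)
  exact ⟨aeval U r, by rw [← hUG p, hr, map_mul, aeval_X, hU]⟩

namespace IsPoised

variable {n m : ℕ} {X : Set Pt}

lemma finite (hX : IsPoised n X) : X.Finite :=
  Set.finite_of_ncard_pos <| hX.1 ▸ Nat.div_pos (by nlinarith) two_pos

lemma exists_isFund (hX : IsPoised n X) {A : Pt} (hA : A ∈ X) : ∃ p, IsFund n X A p := by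
  obtain ⟨p, ⟨hdeg, hval⟩, -⟩ := hX.2 fun B => if B = A then 1 else 0
  exact ⟨p, hdeg, by simpa using hval A hA, fun B hB hBA => by simpa [hBA] using hval B hB⟩

lemma ncard_inter_le (hX : IsPoised n X) {L : Set Pt} (hL : IsLine L) :
    (X ∩ L).ncard ≤ n + 1 := by
  by_contra! hcard
  obtain ⟨A, hAX, hAL⟩ : (X ∩ L).Nonempty := Set.nonempty_of_ncard_ne_zero (by omega)
  obtain ⟨p, hpdeg, hpA, hpX⟩ := hX.exists_isFund hAX
  have hS : n < ((X ∩ L) \ {A}).ncard := by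
    rw [Set.ncard_sdiff_singleton_of_mem (show A ∈ X ∩ L from ⟨hAX, hAL⟩)]
    omega
  have := hL.eval_eq_zero hpdeg (Set.sdiff_subset.trans Set.inter_subset_right) hS
    (fun s hs => hpX s hs.1.1 hs.2) hAL
  exact one_ne_zero (hpA ▸ this)

lemma diff (hX : IsPoised (m + 1) X) {L : Set Pt} (hL : IsMaxLine (m + 1) X L) :
    IsPoised m (X \ L) := by
  obtain ⟨⟨f, hf, rfl⟩, hcard⟩ := hL
  have hf0 : f ≠ 0 := by rintro rfl; simp at hf
  refine ⟨?_, fun c => ?_⟩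
  · have hN : (m + 1 + 1) * (m + 1 + 2) / 2 = (m + 1) * (m + 2) / 2 + (m + 2) := by
      rw [show (m + 1 + 1) * (m + 1 + 2) = (m + 1) * (m + 2) + (m + 2) * 2 by ring,
        Nat.add_mul_div_right _ _ two_pos]
    have := Set.ncard_inter_add_ncard_sdiff_eq_ncard X {x | eval x f = 0} hX.finite
    have := hX.1
    omega
  -- the interpolant of `f * c` vanishes at the `m + 2` nodes on the line, so `f` divides it
  obtain ⟨p, ⟨hpdeg, hpval⟩, hpuniq⟩ := hX.2 fun B => eval B f * c B
  obtain ⟨q, rfl⟩ : f ∣ p := dvd_of_eval_eq_zero hf fun y hy =>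
    IsLine.eval_eq_zero ⟨f, hf, rfl⟩ hpdeg (Set.inter_subset_right (s := X)) (by omega)
      (fun s hs => by rw [hpval s hs.1, hs.2, zero_mul]) hy
  refine ⟨q, ⟨?_, fun B hB => mul_left_cancel₀ hB.2 (by rw [← map_mul, hpval B hB.1])⟩, ?_⟩
  · rcases eq_or_ne q 0 with rfl | hq0
    · simp
    · rw [totalDegree_mul_of_isDomain hf0 hq0, hf] at hpdeg
      omega
  · rintro q' ⟨hq'deg, hq'val⟩
    refine mul_left_cancel₀ hf0 (hpuniq _ ⟨?_, fun B hB => ?_⟩)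
    · grw [totalDegree_mul, hf, hq'deg]; omega
    · by_cases hBL : eval B f = 0
      · simp [hBL]
      · rw [map_mul, hq'val B ⟨hB, hBL⟩]

lemma isMaxLine_diff (hX : IsPoised (m + 1) X) {L L' : Set Pt} (hL : IsMaxLine (m + 1) X L)
    (hL' : IsMaxLine (m + 1) X L') (hne : L ≠ L') : IsMaxLine m (X \ L) L' := by
  refine ⟨hL'.1, le_antisymm ((hX.diff hL).ncard_inter_le hL'.1) ?_⟩
  have hsub : X ∩ L' ⊆ ((X \ L) ∩ L') ∪ (L ∩ L') := fun x ⟨hxX, hxL'⟩ => by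
    by_cases hxL : x ∈ L
    · exact Or.inr ⟨hxL, hxL'⟩
    · exact Or.inl ⟨⟨hxX, hxL⟩, hxL'⟩
  have h := hL.1.subsingleton_inter hL'.1 hne
  have hone : (L ∩ L').ncard ≤ 1 :=
    have := h.finite.to_subtype
    Set.ncard_le_one_iff_subsingleton.2 h
  have := (Set.ncard_le_ncard hsub ((hX.finite.sdiff.inter_of_left _).union h.finite)).trans
    (Set.ncard_union_le _ _)
  have := hL'.2
  omega

lemma exists_mem_inter_of_isMaxLine (hX : IsPoised (m + 1) X) {L L' : Set Pt}
    (hL : IsMaxLine (m + 1) X L) (hL' : IsMaxLine (m + 1) X L') (hne : L ≠ L') :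
    ∃ P ∈ X, P ∈ L ∧ P ∈ L' := by
  by_contra! h
  have heq : (X \ L) ∩ L' = X ∩ L' := by
    ext x
    exact ⟨fun hx => ⟨hx.1.1, hx.2⟩, fun hx => ⟨⟨hx.1, fun hxL => h x hx.1 hxL hx.2⟩, hx.2⟩⟩
  have := (hX.isMaxLine_diff hL hL' hne).2
  rw [heq, hL'.2] at this
  omega

lemma notMem_of_isMaxLine (hX : IsPoised (m + 2) X) {L₁ L₂ L₃ : Set Pt}
    (h₁ : IsMaxLine (m + 2) X L₁) (h₂ : IsMaxLine (m + 2) X L₂) (h₃ : IsMaxLine (m + 2) X L₃)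
    (h₁₂ : L₁ ≠ L₂) (h₁₃ : L₁ ≠ L₃) (h₂₃ : L₂ ≠ L₃) {P : Pt} (hP₁ : P ∈ L₁) (hP₂ : P ∈ L₂) :
    P ∉ L₃ := by
  intro hP₃
  obtain ⟨Q, ⟨-, hQ₁⟩, hQ₂, hQ₃⟩ := (hX.diff h₁).exists_mem_inter_of_isMaxLine
    (hX.isMaxLine_diff h₁ h₂ h₁₂) (hX.isMaxLine_diff h₁ h₃ h₁₃) h₂₃
  exact h₂₃ (h₂.1.eq_of_mem h₃.1 hP₂ hQ₂ hP₃ hQ₃ fun h => hQ₁ (h ▸ hP₁))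

lemma isPoised_zero_diff_iUnion (hX : IsPoised n X) {M : Fin n → Set Pt}
    (hM : ∀ i, IsMaxLine n X (M i)) (hMinj : Function.Injective M) :
    IsPoised 0 (X \ ⋃ i, M i) := by
  induction n generalizing X with
  | zero => simpa using hX
  | succ m ih =>
    rw [Set.iUnion_fin_add_one_eq_iUnion_succ, ← Set.sdiff_sdiff]
    exact ih (hX.diff (hM 0)) (fun i => hX.isMaxLine_diff (hM 0) (hM i.succ)
      (hMinj.ne (Fin.succ_ne_zero i).symm)) (hMinj.comp (Fin.succ_injective _))

lemma finite_setOf_isMaxLine (hX : IsPoised n X) (hn : 1 ≤ n) :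
    {L | IsMaxLine n X L}.Finite := by
  refine ((hX.finite.prod hX.finite).image fun PQ : Pt × Pt => affLine PQ.1 PQ.2).subset ?_
  rintro L ⟨hL, hcard⟩
  obtain ⟨P, Q, hP, hQ, hPQ⟩ := (Set.one_lt_ncard_iff (hX.finite.inter_of_left L)).1 (by omega)
  exact ⟨(P, Q), ⟨hP.1, hQ.1⟩, (hL.eq_affLine hP.2 hQ.2 hPQ).symm⟩

end IsPoised

lemma Finset.exists_mem_of_cover_of_card_le_two {α : Type*} {T : Finset (Set α)}
    (hT : T.card ≤ 2) {o a a' b b' : α} (ho : ∃ L ∈ T, o ∈ L) (ha : ∃ L ∈ T, a ∈ L)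
    (ha' : ∃ L ∈ T, a' ∈ L) (hb : ∃ L ∈ T, b ∈ L) (hb' : ∃ L ∈ T, b' ∈ L)
    (hab : ∀ L ∈ T, a ∈ L → b ∉ L) (ha'b' : ∀ L ∈ T, a' ∈ L → b' ∉ L)
    (haa' : ∀ L ∈ T, a ∈ L → a' ∈ L → o ∉ L) :
    ∃ L ∈ T, o ∈ L ∧ (a ∈ L ∧ b' ∈ L ∨ a' ∈ L ∧ b ∈ L ∨ b ∈ L ∧ b' ∈ L) := by
  have three : ∀ L₁ ∈ T, ∀ L₂ ∈ T, ∀ L₃ ∈ T, L₁ = L₂ ∨ L₁ = L₃ ∨ L₂ = L₃ := by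
    intro L₁ h₁ L₂ h₂ L₃ h₃
    by_contra! hne
    exact absurd (Finset.two_lt_card_iff.2 ⟨L₁, L₂, L₃, h₁, h₂, h₃, hne⟩) (by omega)
  obtain ⟨Lo, hLo, ho⟩ := ho
  obtain ⟨La, hLa, ha⟩ := ha
  obtain ⟨La', hLa', ha'⟩ := ha'
  obtain ⟨Lb, hLb, hb⟩ := hb
  obtain ⟨Lb', hLb', hb'⟩ := hb'
  have := three Lo hLo Lb hLb Lb' hLb'
  have := three Lo hLo Lb' hLb' La' hLa'
  have := three Lo hLo Lb hLb La hLa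
  have := three Lo hLo Lb hLb La' hLa'
  grind

lemma eq_const_or_forall_eq_of_rel {n : ℕ} {α : Type*} (hn : n ≠ 3) {a b : Fin n → α}
    (ha : Function.Injective a) (h : ∀ i j, i ≠ j → b i = b j ∨ a i = b j ∨ a j = b i) :
    (∀ i j, b i = b j) ∨ ∃ j, ∀ i, i ≠ j → b i = a j := by
  by_contra! hc
  obtain ⟨⟨i₀, j₀, hb₀⟩, hr⟩ := hc
  obtain ⟨i, j, hij, hbi, hbij⟩ : ∃ i j, i ≠ j ∧ b i = a j ∧ b i ≠ b j := by
    have := h i₀ j₀ (fun h => hb₀ (h ▸ rfl))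
    grind
  have hinj : ∀ x y, a x = a y ↔ x = y := fun x y => ha.eq_iff
  obtain ⟨k, hkj, hk⟩ := hr j
  have hki : k ≠ i := by grind
  have hbk : b k = a i := by grind
  rcases h k j hkj with hbjk | hajk | hakj
  · obtain ⟨m, hmi, hm⟩ := hr i
    have := h m i hmi
    have := h m k (by grind)
    grind
  · -- `b i = a j`, `b j = a k`, `b k = a i`: no fourth index is compatible with this cycle
    obtain ⟨m, -, hm⟩ := Finset.exists_mem_notMem_of_card_lt_card (t := Finset.univ)
      (s := {i, j, k}) (lt_of_le_of_ne (Finset.card_le_univ _) (by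
        rw [Finset.card_univ, Fintype.card_fin, Finset.card_eq_three.2 ⟨i, j, k, by grind⟩]
        exact hn.symm))
    simp only [Finset.mem_insert, Finset.mem_singleton, not_or] at hm
    have := h m i hm.1
    have := h m j hm.2.1
    have := h m k hm.2.2
    grind
  · exact hk hakj.symm

lemma IsLine.mem_range_of_forall_exists_mem {n : ℕ} {L : Set Pt} (hL : IsLine L)
    {Z : Fin n → Set Pt} (hZ : ∀ t, IsLine (Z t)) {S : Set Pt} (hSL : S ⊆ L) (hS : n < S.ncard)
    (hcover : ∀ y ∈ S, ∃ t, y ∈ Z t) : L ∈ Set.range Z := by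
  have : Nonempty (Fin n) :=
    let ⟨y, hy⟩ := Set.nonempty_of_ncard_ne_zero (by omega : S.ncard ≠ 0)
    ⟨(hcover y hy).choose⟩
  choose! τ hτ using hcover
  obtain ⟨y, hy, y', hy', hne, heq⟩ := Set.exists_ne_map_eq_of_ncard_lt_of_maps_to
    (t := Set.univ) (by simpa using hS) fun y _ => Set.mem_univ (τ y)
  exact ⟨τ y, (hZ _).eq_of_mem hL (hτ y hy) (heq ▸ hτ y' hy') (hSL hy) (hSL hy') hne⟩

namespace IsGC

variable {n : ℕ} {X : Set Pt}

lemma exists_factor_lines (hX : IsGC n X) {P : Pt} (hP : P ∈ X) :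
    ∃ Z : Fin n → Set Pt, (∀ t, IsLine (Z t) ∧ P ∉ Z t) ∧ ∀ y ∈ X, y ≠ P → ∃ t, y ∈ Z t := by
  obtain ⟨p, ⟨-, hpP, hpX⟩, f, hf, rfl⟩ := hX.2 P hP
  refine ⟨fun t => {x | eval x (f t) = 0}, fun t => ⟨⟨f t, hf t, rfl⟩, fun h => ?_⟩,
    fun y hy hyP => ?_⟩
  · rw [map_prod, Finset.prod_eq_zero (Finset.mem_univ t) (show eval P (f t) = 0 from h)] at hpP
    exact zero_ne_one hpP
  · obtain ⟨t, -, ht⟩ := Finset.prod_eq_zero_iff.1 ((map_prod _ _ _).symm.trans (hpX y hy hyP))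
    exact ⟨t, ht⟩

lemma exists_lines_cover (hX : IsGC n X) {P : Pt} (hP : P ∈ X) {𝓜 : Finset (Set Pt)}
    (h𝓜 : ∀ M ∈ 𝓜, IsMaxLine n X M ∧ P ∉ M) :
    ∃ T : Finset (Set Pt), T.card + 𝓜.card ≤ n ∧ (∀ L ∈ T, IsLine L ∧ P ∉ L) ∧
      ∀ y ∈ X, y ≠ P → (∀ M ∈ 𝓜, y ∉ M) → ∃ L ∈ T, y ∈ L := by
  classical
  obtain ⟨Z, hZ, hcover⟩ := hX.exists_factor_lines hP
  -- the `n + 1` nodes of a maximal line avoiding `P` lie on the `n` factor lines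
  have hsub : 𝓜 ⊆ Finset.univ.image Z := fun M hM => by
    obtain ⟨⟨hM, hMcard⟩, hPM⟩ := h𝓜 M hM
    obtain ⟨t, rfl⟩ := hM.mem_range_of_forall_exists_mem (fun t => (hZ t).1)
      Set.inter_subset_right (by omega) fun y hy => hcover y hy.1 fun h => hPM (h ▸ hy.2)
    exact Finset.mem_image_of_mem _ (Finset.mem_univ t)
  refine ⟨Finset.univ.image Z \ 𝓜, ?_, fun L hL => ?_, fun y hy hyP hyM => ?_⟩
  · have := Finset.card_image_le (s := Finset.univ) (f := Z)
    rw [Finset.card_univ, Fintype.card_fin] at this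
    rw [Finset.card_sdiff_of_subset hsub]
    have := Finset.card_le_card hsub
    omega
  · obtain ⟨t, -, rfl⟩ := Finset.mem_image.1 (Finset.mem_sdiff.1 hL).1
    exact hZ t
  · obtain ⟨t, ht⟩ := hcover y hy hyP
    exact ⟨Z t, Finset.mem_sdiff.2 ⟨Finset.mem_image_of_mem _ (Finset.mem_univ t),
      fun h => hyM _ h ht⟩, ht⟩

end IsGC

lemma Set.add_one_le_ncard_of_injective {α : Type*} {s : Set α} (hs : s.Finite) {x : α}
    (hx : x ∈ s) {n : ℕ} {C : Fin n → α} (hC : Function.Injective C) (hCs : ∀ i, C i ∈ s)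
    (hxC : ∀ i, x ≠ C i) : n + 1 ≤ s.ncard := by
  calc n + 1 = (insert x (Set.range C)).ncard := by
        rw [Set.ncard_insert_of_notMem (by rintro ⟨i, hi⟩; exact hxC i hi.symm),
          Set.ncard_range_of_injective hC, Nat.card_eq_fintype_card, Fintype.card_fin]
    _ ≤ s.ncard := Set.ncard_le_ncard (Set.insert_subset hx (Set.range_subset_iff.2 hCs)) hs

section MaxLines

variable {n : ℕ} {X : Set Pt} {M : Fin n → Set Pt}

lemma IsPoised.exists_mem_forall_notMem (hX : IsPoised n X) (hM : ∀ i, IsMaxLine n X (M i))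
    (hMinj : Function.Injective M) : ∃ O ∈ X, ∀ i, O ∉ M i := by
  obtain ⟨O, hOX, hOM⟩ := Set.nonempty_of_ncard_ne_zero
    ((hX.isPoised_zero_diff_iUnion hM hMinj).1.trans_ne one_ne_zero)
  exact ⟨O, hOX, fun i hi => hOM (Set.mem_iUnion.2 ⟨i, hi⟩)⟩

lemma exists_mem_forall_mem_iff (hM : ∀ k, IsMaxLine n X (M k))
    (hMinj : Function.Injective M) (i : Fin n) (A : Pt) :
    ∃ B ∈ X, B ≠ A ∧ ∀ k, B ∈ M k ↔ k = i := by
  suffices ∃ B ∈ (X ∩ M i) \ {A}, ∀ k, k ≠ i → B ∉ M k by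
    obtain ⟨B, ⟨⟨hBX, hBi⟩, hBA⟩, hB⟩ := this
    exact ⟨B, hBX, hBA, fun k => ⟨fun h => by_contra fun hk => hB k hk h, fun h => h ▸ hBi⟩⟩
  by_contra! h
  have : Nonempty (Fin n) := ⟨i⟩
  choose! κ hκ using h
  have hlt : ({i}ᶜ : Set (Fin n)).ncard < ((X ∩ M i) \ {A}).ncard := by
    have := Set.pred_ncard_le_ncard_sdiff_singleton (X ∩ M i) A
    rw [Set.ncard_compl, Set.ncard_singleton, Nat.card_eq_fintype_card, Fintype.card_fin]
    have := (hM i).2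
    have := i.pos
    omega
  obtain ⟨y, hy, y', hy', hne, heq⟩ :=
    Set.exists_ne_map_eq_of_ncard_lt_of_maps_to hlt fun y hy => (hκ y hy).1
  exact (hκ y hy).1 (hMinj ((hM i).1.eq_of_mem (hM (κ y)).1 hy.1.2 hy'.1.2 (hκ y hy).2
    (heq ▸ (hκ y' hy').2) hne)).symm

lemma IsGC.exists_two_lines_cover (hX : IsGC n X) (hM : ∀ k, IsMaxLine n X (M k))
    (hMinj : Function.Injective M) {i j : Fin n} (hij : i ≠ j) :
    ∃ P ∈ X, P ∈ M i ∧ P ∈ M j ∧ ∃ T : Finset (Set Pt), T.card ≤ 2 ∧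
      (∀ L ∈ T, IsLine L ∧ P ∉ L) ∧
      ∀ y ∈ X, y ≠ P → (∀ k, k ≠ i → k ≠ j → y ∉ M k) → ∃ L ∈ T, y ∈ L := by
  classical
  obtain ⟨m, rfl⟩ : ∃ m, n = m + 2 :=
    ⟨n - 2, by have := i.isLt; have := j.isLt; have := Fin.val_ne_of_ne hij; omega⟩
  obtain ⟨P, hPX, hPi, hPj⟩ :=
    hX.1.exists_mem_inter_of_isMaxLine (m := m + 1) (hM i) (hM j) (hMinj.ne hij)
  obtain ⟨T, hT, hTP, hcover⟩ := hX.exists_lines_cover hPX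
    (𝓜 := (Finset.univ \ {i, j}).image M) <| by
      simp only [Finset.mem_image, Finset.mem_sdiff, Finset.mem_univ, Finset.mem_insert,
        Finset.mem_singleton, true_and, not_or]
      rintro _ ⟨k, ⟨hki, hkj⟩, rfl⟩
      exact ⟨hM k, hX.1.notMem_of_isMaxLine (hM i) (hM j) (hM k) (hMinj.ne hij)
        (hMinj.ne (Ne.symm hki)) (hMinj.ne (Ne.symm hkj)) hPi hPj⟩
  refine ⟨P, hPX, hPi, hPj, T, ?_, hTP, fun y hy hyP hyM => hcover y hy hyP ?_⟩
  · rw [Finset.card_image_of_injective _ hMinj, Finset.card_sdiff_of_subset (Finset.subset_univ _),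
      Finset.card_univ, Fintype.card_fin, Finset.card_pair hij] at hT
    omega
  · simp only [Finset.mem_image, Finset.mem_sdiff, Finset.mem_univ, Finset.mem_insert,
      Finset.mem_singleton, true_and, not_or]
    rintro _ ⟨k, ⟨hki, hkj⟩, rfl⟩
    exact hyM k hki hkj

lemma IsGC.exists_line_through_of_ne (hX : IsGC n X) (hM : ∀ k, IsMaxLine n X (M k))
    (hMinj : Function.Injective M) {O : Pt} (hO : O ∈ X) (hOM : ∀ k, O ∉ M k)
    {A B : Fin n → Pt} (hA : ∀ i, A i ∈ X) (hB : ∀ i, B i ∈ X)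
    (hAM : ∀ i k, A i ∈ M k ↔ k = i) (hBM : ∀ i k, B i ∈ M k ↔ k = i) (hAB : ∀ i, A i ≠ B i)
    (hOAA : ∀ i j, i ≠ j → ∀ L, IsLine L → O ∈ L → A i ∈ L → A j ∉ L) {i j : Fin n}
    (hij : i ≠ j) :
    ∃ L, IsLine L ∧ O ∈ L ∧ (A i ∈ L ∧ B j ∈ L ∨ A j ∈ L ∧ B i ∈ L ∨ B i ∈ L ∧ B j ∈ L) := by
  obtain ⟨P, -, hPi, hPj, T, hT, hTP, hcover⟩ := hX.exists_two_lines_cover hM hMinj hij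
  have hcover' : ∀ y ∈ X, ∀ l, (l = i ∨ l = j) → (∀ k, y ∈ M k ↔ k = l) → ∃ L ∈ T, y ∈ L :=
    fun y hy l hl hyM => hcover y hy (by rintro rfl; grind) (by grind)
  have hPM : ∀ l, l = i ∨ l = j → P ∈ M l := by rintro l (rfl | rfl) <;> assumption
  have hfactor : ∀ l, l = i ∨ l = j → ∀ L ∈ T, A l ∈ L → B l ∉ L := fun l hl L hL hAL hBL =>
    (hTP L hL).2 ((hTP L hL).1.eq_of_mem (hM l).1 hAL hBL ((hAM l l).2 rfl) ((hBM l l).2 rfl)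
      (hAB l) ▸ hPM l hl)
  obtain ⟨L, hL, hOL, hLA⟩ := Finset.exists_mem_of_cover_of_card_le_two hT
    (hcover O hO (fun h => hOM i (h ▸ hPi)) fun k _ _ => hOM k)
    (hcover' _ (hA i) i (.inl rfl) (hAM i)) (hcover' _ (hA j) j (.inr rfl) (hAM j))
    (hcover' _ (hB i) i (.inl rfl) (hBM i)) (hcover' _ (hB j) j (.inr rfl) (hBM j))
    (hfactor i (.inl rfl)) (hfactor j (.inr rfl))
    (fun L hL hAL hA'L hOL => hOAA i j hij L (hTP L hL).1 hOL hAL hA'L)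
  exact ⟨L, (hTP L hL).1, hOL, hLA⟩

end MaxLines

lemma exists_line_through_ncard_ge {n : ℕ} (hn : 1 ≤ n) (hn3 : n ≠ 3) {X : Set Pt}
    (hXfin : X.Finite) {O : Pt} (hO : O ∈ X) {A B : Fin n → Pt} (hA : ∀ i, A i ∈ X)
    (hB : ∀ i, B i ∈ X) (hBinj : Function.Injective B) (hAB : ∀ i j, A i ≠ B j)
    (hOA : ∀ i, O ≠ A i) (hOB : ∀ i, O ≠ B i)
    (hOAA : ∀ i j, i ≠ j → ∀ L, IsLine L → O ∈ L → A i ∈ L → A j ∉ L)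
    (hrel : ∀ i j, i ≠ j →
      ∃ L, IsLine L ∧ O ∈ L ∧ (A i ∈ L ∧ B j ∈ L ∨ A j ∈ L ∧ B i ∈ L ∨ B i ∈ L ∧ B j ∈ L)) :
    ∃ L, IsLine L ∧ O ∈ L ∧ n + 1 ≤ (X ∩ L).ncard := by
  set a := fun i => affLine O (A i)
  set b := fun i => affLine O (B i)
  have ha : ∀ i L, IsLine L → O ∈ L → A i ∈ L → L = a i := fun i L hL hOL hAL =>
    hL.eq_affLine hOL hAL (hOA i)
  have hb : ∀ i L, IsLine L → O ∈ L → B i ∈ L → L = b i := fun i L hL hOL hBL =>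
    hL.eq_affLine hOL hBL (hOB i)
  have hbB : ∀ i, B i ∈ b i := fun i => right_mem_affLine _ _
  have haline : ∀ i, IsLine (a i) := fun i => isLine_affLine (hOA i)
  have hainj : Function.Injective a := fun i j hab => by_contra fun hij =>
    hOAA i j hij _ (haline i) (left_mem_affLine _ _) (right_mem_affLine _ _)
      (hab ▸ right_mem_affLine _ _)
  have hrel' : ∀ i j, i ≠ j → b i = b j ∨ a i = b j ∨ a j = b i := fun i j hij => by
    obtain ⟨L, hL, hOL, h | h | h⟩ := hrel i j hij
    · exact .inr (.inl ((ha i L hL hOL h.1).symm.trans (hb j L hL hOL h.2)))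
    · exact .inr (.inr ((ha j L hL hOL h.1).symm.trans (hb i L hL hOL h.2)))
    · exact .inl ((hb i L hL hOL h.1).symm.trans (hb j L hL hOL h.2))
  rcases eq_const_or_forall_eq_of_rel hn3 hainj hrel' with hconst | ⟨j, hj⟩
  · let i₀ : Fin n := ⟨0, hn⟩
    refine ⟨b i₀, isLine_affLine (hOB i₀), left_mem_affLine _ _,
      Set.add_one_le_ncard_of_injective (hXfin.inter_of_left _) ⟨hO, left_mem_affLine _ _⟩ hBinj
        (fun i => ⟨hB i, show B i ∈ b i₀ from hconst i i₀ ▸ hbB i⟩) hOB⟩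
  · refine ⟨a j, haline j, left_mem_affLine _ _,
      Set.add_one_le_ncard_of_injective (C := fun i => if i = j then A j else B i)
        (hXfin.inter_of_left _) ⟨hO, left_mem_affLine _ _⟩ ?_ (fun i => ?_) (fun i => ?_)⟩
    · intro i i' h
      simp only at h
      split_ifs at h <;> grind [hBinj.eq_iff]
    · split_ifs with hij
      · exact ⟨hA j, right_mem_affLine _ _⟩
      · exact ⟨hB i, show B i ∈ a j from hj i hij ▸ hbB i⟩
    · split_ifs
      · exact hOA j
      · exact hOB i

section NodeLine

variable {n : ℕ} {X ℓ : Set Pt} {A : Fin n → Pt}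

lemma IsNodeLine.mem_iff_eq (hℓ : IsNodeLine n X ℓ) {M : Fin n → Set Pt}
    (hM : ∀ k, IsMaxLine n X (M k)) (hAinj : Function.Injective A)
    (hA : ∀ i, A i ∈ ℓ ∧ A i ∈ M i) (i k : Fin n) : A i ∈ M k ↔ k = i := by
  refine ⟨fun h => by_contra fun hki => ?_, fun h => h ▸ (hA i).2⟩
  have hMℓ := (hM k).1.eq_of_mem hℓ.1 h (hA k).2 (hA i).1 (hA k).1 (hAinj.ne (Ne.symm hki))
  have := (hM k).2
  rw [hMℓ, hℓ.2] at this
  omega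

lemma IsNodeLine.notMem (hℓ : IsNodeLine n X ℓ) (hXfin : X.Finite)
    (hAinj : Function.Injective A) (hA : ∀ i, A i ∈ X ∧ A i ∈ ℓ) {O : Pt} (hO : O ∈ X)
    (hOA : ∀ i, O ≠ A i) : O ∉ ℓ := fun hOℓ => by
  have := Set.add_one_le_ncard_of_injective (hXfin.inter_of_left ℓ) ⟨hO, hOℓ⟩ hAinj hA hOA
  rw [hℓ.2] at this
  omega

end NodeLine

/-- Let `X` be a `GC_n` set, `n ≥ 1`, `n ≠ 3`, and `ℓ` an `n`-node line of `X`.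
If there are `n` distinct maximal lines passing through `n` distinct nodes of `X` on `ℓ`
(one through each), then `X` has at least `n + 1` maximal lines. -/
theorem exists_further_maxLine (n : ℕ) (hn : 1 ≤ n) (hn3 : n ≠ 3)
    (X ℓ : Set Pt) (hX : IsGC n X) (hℓ : IsNodeLine n X ℓ)
    (M : Fin n → Set Pt) (A : Fin n → Pt)
    (hMinj : Function.Injective M) (hAinj : Function.Injective A)
    (hM : ∀ i, IsMaxLine n X (M i))
    (hA : ∀ i, A i ∈ X ∧ A i ∈ ℓ ∧ A i ∈ M i) :
    n + 1 ≤ {L : Set Pt | IsMaxLine n X L}.ncard := by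
  have hXfin := hX.1.finite
  have hAM := hℓ.mem_iff_eq hM hAinj fun i => (hA i).2
  obtain ⟨O, hOX, hOM⟩ := hX.1.exists_mem_forall_notMem hM hMinj
  have hOA : ∀ i, O ≠ A i := fun i h => hOM i (h ▸ (hA i).2.2)
  have hOℓ := hℓ.notMem hXfin hAinj (fun i => ⟨(hA i).1, (hA i).2.1⟩) hOX hOA
  have hOAA : ∀ i j, i ≠ j → ∀ L, IsLine L → O ∈ L → A i ∈ L → A j ∉ L :=
    fun i j hij L hL hOL hAi hAj =>
      hOℓ (hL.eq_of_mem hℓ.1 hAi hAj (hA i).2.1 (hA j).2.1 (hAinj.ne hij) ▸ hOL)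
  choose B hBX hBA hBM using fun i => exists_mem_forall_mem_iff hM hMinj i (A i)
  have hOB : ∀ i, O ≠ B i := fun i h => hOM i (h ▸ (hBM i i).2 rfl)
  have hAB : ∀ i j, A i ≠ B j := fun i j h => by
    obtain rfl := (hAM i j).1 (h ▸ (hBM j j).2 rfl)
    exact hBA j h.symm
  have hBinj : Function.Injective B := fun i j h => ((hBM i j).1 (h ▸ (hBM j j).2 rfl)).symm
  obtain ⟨L, hL, hOL, hcard⟩ := exists_line_through_ncard_ge hn hn3 hXfin hOX
    (fun i => (hA i).1) hBX hBinj hAB hOA hOB hOAA fun i j hij =>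
      hX.exists_line_through_of_ne hM hMinj hOX hOM (fun i => (hA i).1) hBX hAM hBM
        (fun i => hAB i i) hOAA hij
  exact Set.add_one_le_ncard_of_injective (hX.1.finite_setOf_isMaxLine hn)
    ⟨hL, le_antisymm (hX.1.ncard_inter_le hL) hcard⟩ hMinj hM fun i h => hOM i (h ▸ hOL)
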